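/- Let $U, V$ be positive random variables whose ratio $U/V \geq 1$ has Laplace transform $\mathbb{E} e^{-\lambda U/V} = \frac{e^{-\lambda}}{1 + \frac{\alpha}{2}\int_0^1 \frac{1 - e^{-\lambda u}}{u^{\alpha/2+1}} du}$ for all $\lambda > 0$, where $\alpha \in (0,2)$. Then for every $\varepsilon \in (0, 1/2)$, $\mathbb{P}\left( \frac{V}{U} \geq (1-\varepsilon)^2 \right) > 0$. -/

import Mathlib

/-!
If `V/U < (1-ε)²` almost surely, then `U/V > r := (1-ε)⁻²` and the left side of the Laplace
identity is at most `e^{-λr}`. Since `1 - e^{-λu} ≤ λu`, the integral in the denominator is at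
most `λ/(1-α/2)`, so the identity gives `e^{λ(r-1)} ≤ 1 + cλ` for all `λ > 0` with a constant `c`,
which fails for large `λ` because `r > 1`.
-/

open MeasureTheory ProbabilityTheory

lemma one_sub_exp_neg_mul_nonneg {lam u : ℝ} (hlam : 0 ≤ lam) (hu : 0 ≤ u) :
    0 ≤ 1 - Real.exp (-lam * u) := by
  have : Real.exp (-lam * u) ≤ 1 := Real.exp_le_one_iff.mpr (by nlinarith)
  linarith

lemma setIntegral_one_sub_exp_div_rpow_nonneg {s lam : ℝ} (hlam : 0 ≤ lam) :
    0 ≤ ∫ u in Set.Ioc (0 : ℝ) 1, (1 - Real.exp (-lam * u)) / u ^ s :=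
  setIntegral_nonneg measurableSet_Ioc fun _ hu =>
    div_nonneg (one_sub_exp_neg_mul_nonneg hlam hu.1.le) (Real.rpow_nonneg hu.1.le _)

open Real in
lemma setIntegral_one_sub_exp_div_rpow_le {β lam : ℝ} (hβ : β < 1) (hlam : 0 ≤ lam) :
    ∫ u in Set.Ioc (0 : ℝ) 1, (1 - exp (-lam * u)) / u ^ (β + 1) ≤ lam / (1 - β) := by
  have hint : IntegrableOn (fun u : ℝ => lam * u ^ (-β)) (Set.Ioc 0 1) :=
    (intervalIntegral.intervalIntegrable_rpow' (by linarith)).1.const_mul lam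
  have hval : ∫ u in Set.Ioc (0 : ℝ) 1, lam * u ^ (-β) = lam / (1 - β) := by
    rw [← intervalIntegral.integral_of_le zero_le_one, intervalIntegral.integral_const_mul,
      integral_rpow (Or.inl (by linarith)), one_rpow, zero_rpow (by linarith)]
    ring_nf
  rw [← hval]
  refine integral_mono_of_nonneg ?_ hint ?_ <;>
    filter_upwards [ae_restrict_mem measurableSet_Ioc] with u hu
  · exact div_nonneg (one_sub_exp_neg_mul_nonneg hlam hu.1.le) (rpow_nonneg hu.1.le _)
  · have hpow : 0 < u ^ β := rpow_pos_of_pos hu.1 β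
    rw [div_le_iff₀ (rpow_pos_of_pos hu.1 _), rpow_add hu.1, rpow_one, rpow_neg hu.1.le]
    calc 1 - exp (-lam * u) ≤ lam * u := by linarith [add_one_le_exp (-lam * u)]
      _ = lam * (u ^ β)⁻¹ * (u ^ β * u) := by field_simp

lemma integral_exp_neg_mul_le_of_ae_le {Ω : Type*} [MeasurableSpace Ω] {P : Measure Ω}
    [IsProbabilityMeasure P] {X : Ω → ℝ} {r lam : ℝ} (hlam : 0 ≤ lam) (hX : ∀ᵐ ω ∂P, r ≤ X ω) :
    ∫ ω, Real.exp (-lam * X ω) ∂P ≤ Real.exp (-lam * r) := by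
  calc ∫ ω, Real.exp (-lam * X ω) ∂P ≤ ∫ _, Real.exp (-lam * r) ∂P :=
        integral_mono_of_nonneg (ae_of_all _ fun _ => (Real.exp_pos _).le) (integrable_const _)
          (hX.mono fun ω hω => Real.exp_le_exp.mpr (by nlinarith))
    _ = Real.exp (-lam * r) := by simp

lemma exists_one_add_mul_lt_exp_mul (c : ℝ) {δ : ℝ} (hδ : 0 < δ) :
    ∃ lam > 0, 1 + c * lam < Real.exp (lam * δ) := by
  set lam := 2 * |c| / δ ^ 2 + 1
  have hlam : 0 < lam := by positivity
  have hc : 2 * |c| ≤ lam * δ ^ 2 := by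
    have : lam * δ ^ 2 = 2 * |c| + δ ^ 2 := by simp only [lam]; field_simp
    nlinarith
  refine ⟨lam, hlam, ?_⟩
  calc 1 + c * lam < 1 + lam * δ + (lam * δ) ^ 2 / 2 := by
        nlinarith [le_abs_self c, mul_pos hlam hδ]
    _ ≤ Real.exp (lam * δ) := Real.quadratic_le_exp_of_nonneg (by positivity)

theorem stmt16_general {Ω : Type*} [MeasurableSpace Ω] (P : Measure Ω) [IsProbabilityMeasure P]
    (α : ℝ) (hα : α ∈ Set.Ioo (0 : ℝ) 2)
    (U V : Ω → ℝ)
    (hpos : ∀ᵐ ω ∂P, 0 < V ω ∧ V ω ≤ U ω)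
    (hlap : ∀ lam : ℝ, 0 < lam →
      ∫ ω, Real.exp (-lam * (U ω / V ω)) ∂P =
        Real.exp (-lam) /
          (1 + (α / 2) *
            ∫ u in Set.Ioc (0 : ℝ) 1, (1 - Real.exp (-lam * u)) / u ^ (α / 2 + 1)))
    (ε : ℝ) (hε : ε ∈ Set.Ioo (0 : ℝ) (1 / 2)) :
    0 < P {ω | (1 - ε) ^ 2 ≤ V ω / U ω} := by
  obtain ⟨hα0, hα2⟩ := hα
  obtain ⟨hε0, hε2⟩ := hε
  have hsq : 0 < (1 - ε) ^ 2 := by nlinarith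
  set r := ((1 - ε) ^ 2)⁻¹
  have hr : 1 < r := one_lt_inv₀ hsq |>.mpr (by nlinarith)
  refine pos_iff_ne_zero.mpr fun hnull => ?_
  have hratio : ∀ᵐ ω ∂P, r ≤ U ω / V ω := by
    filter_upwards [hpos, measure_eq_zero_iff_ae_notMem.mp hnull] with ω ⟨hV, hVU⟩ hnotMem
    have hlt : V ω / U ω < (1 - ε) ^ 2 := lt_of_not_ge hnotMem
    simpa only [inv_div] using inv_anti₀ (div_pos hV (hV.trans_le hVU)) hlt.le
  obtain ⟨lam, hlam, hgrowth⟩ :=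
    exists_one_add_mul_lt_exp_mul ((α / 2) / (1 - α / 2)) (sub_pos.mpr hr)
  set J := ∫ u in Set.Ioc (0 : ℝ) 1, (1 - Real.exp (-lam * u)) / u ^ (α / 2 + 1)
  have hJ : (α / 2) * J ≤ (α / 2) / (1 - α / 2) * lam :=
    calc (α / 2) * J ≤ (α / 2) * (lam / (1 - α / 2)) := mul_le_mul_of_nonneg_left
          (setIntegral_one_sub_exp_div_rpow_le (by linarith) hlam.le) (by linarith)
      _ = (α / 2) / (1 - α / 2) * lam := by ring
  have hJ0 : 0 ≤ (α / 2) * J :=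
    mul_nonneg (by linarith) (setIntegral_one_sub_exp_div_rpow_nonneg hlam.le)
  have hlaplace := (hlap lam hlam).symm.trans_le (integral_exp_neg_mul_le_of_ae_le hlam.le hratio)
  rw [div_le_iff₀ (by linarith)] at hlaplace
  have hexp : Real.exp (-lam * r) * Real.exp (lam * (r - 1)) = Real.exp (-lam) := by
    rw [← Real.exp_add]; ring_nf
  refine lt_irrefl (Real.exp (-lam)) ?_
  calc Real.exp (-lam) ≤ Real.exp (-lam * r) * (1 + (α / 2) * J) := hlaplace
    _ ≤ Real.exp (-lam * r) * (1 + (α / 2) / (1 - α / 2) * lam) := by gcongr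
    _ < Real.exp (-lam * r) * Real.exp (lam * (r - 1)) := by gcongr
    _ = Real.exp (-lam) := hexp

/-- Let `U, V` be positive random variables with `V ≤ U`, whose ratio `U/V` has Laplace
transform `E e^{-λ U/V} = e^{-λ} / (1 + (α/2) ∫₀¹ (1 - e^{-λu}) u^{-α/2-1} du)` for all
`λ > 0`, where `α ∈ (0,2)`.  Then `P(V/U ≥ (1-ε)²) > 0` for every `ε ∈ (0, 1/2)`. -/
theorem stmt16 {Ω : Type*} [MeasurableSpace Ω] (P : Measure Ω) [IsProbabilityMeasure P]
    (α : ℝ) (hα : α ∈ Set.Ioo (0 : ℝ) 2)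
    (U V : Ω → ℝ) (hU : Measurable U) (hV : Measurable V)
    (hpos : ∀ᵐ ω ∂P, 0 < V ω ∧ V ω ≤ U ω)
    (hlap : ∀ lam : ℝ, 0 < lam →
      ∫ ω, Real.exp (-lam * (U ω / V ω)) ∂P =
        Real.exp (-lam) /
          (1 + (α / 2) *
            ∫ u in Set.Ioc (0 : ℝ) 1, (1 - Real.exp (-lam * u)) / u ^ (α / 2 + 1)))
    (ε : ℝ) (hε : ε ∈ Set.Ioo (0 : ℝ) (1 / 2)) :
    0 < P {ω | (1 - ε) ^ 2 ≤ V ω / U ω} :=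
  stmt16_general P α hα U V hpos hlap ε hε
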